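/- Graph formula for the nonlocal directional curvature: for every e ∈ S^{N−2}, K_{s,e} = 2·∫₀^{+∞} ρ^{N−2}·( ∫₀^{f(ρe)} (ρ²+h²)^{−(N+2s)/2} dh ) dρ, where the inner integral is taken with sign (it is nonpositive when f(ρe) < 0) and the outer integral converges absolutely. -/

import Mathlib

open MeasureTheory Filter

/-- `χ̃_E = χ_E − χ_{∁E}` for the subgraph `E = {(x′,h) : h ≤ f(x′)}`. -/
noncomputable def chiT {n : ℕ} (f : EuclideanSpace ℝ (Fin n) → ℝ)
    (p : EuclideanSpace ℝ (Fin n) × ℝ) : ℝ :=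
  if p.2 ≤ f p.1 then 1 else -1

/-- The truncated integral `∫₀^{+∞} dρ ∫_ℝ dh χ_{ρ²+h²≥ε²}·ρ^{N−2}·χ̃_E(ρe+h·e_N)/(ρ²+h²)^{(N+2s)/2}`
whose limit as `ε ↓ 0` defines the nonlocal directional curvature. -/
noncomputable def dirInt (N : ℕ) (s : ℝ) (f : EuclideanSpace ℝ (Fin (N - 1)) → ℝ)
    (e : EuclideanSpace ℝ (Fin (N - 1))) (ε : ℝ) : ℝ :=
  ∫ ρ in Set.Ioi (0 : ℝ), ∫ h : ℝ,
    if ε ^ 2 ≤ ρ ^ 2 + h ^ 2 then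
      ρ ^ (N - 2) * chiT f (ρ • e, h) / (ρ ^ 2 + h ^ 2) ^ (((N : ℝ) + 2 * s) / 2)
    else 0

/-- The nonlocal directional curvature of `∂E` at `0` in direction `e` equals `K`
(as a principal value). -/
def HasDirCurv (N : ℕ) (s : ℝ) (f : EuclideanSpace ℝ (Fin (N - 1)) → ℝ)
    (e : EuclideanSpace ℝ (Fin (N - 1))) (K : ℝ) : Prop :=
  Tendsto (dirInt N s f e) (nhdsWithin 0 (Set.Ioi 0)) (nhds K)

/-- The truncated integral `∫_{ℝ^N∖B_ε} χ̃_E(x)/|x|^{N+2s} dx`, written in the coordinates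
`x = (x′,h) ∈ ℝ^{N−1}×ℝ` (so `|x|² = ‖x′‖²+h²`). -/
noncomputable def meanInt (N : ℕ) (s : ℝ) (f : EuclideanSpace ℝ (Fin (N - 1)) → ℝ)
    (ε : ℝ) : ℝ :=
  ∫ p in {p : EuclideanSpace ℝ (Fin (N - 1)) × ℝ | ε ^ 2 ≤ ‖p.1‖ ^ 2 + p.2 ^ 2},
    chiT f p / (‖p.1‖ ^ 2 + p.2 ^ 2) ^ (((N : ℝ) + 2 * s) / 2)

/-- `ω_{N−2} = H^{N−2}(S^{N−2})`, the Hausdorff measure of the unit sphere of `ℝ^{N−1}`. -/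
noncomputable def omegaS (N : ℕ) : ℝ :=
  (μH[(N : ℝ) - 2] (Metric.sphere (0 : EuclideanSpace ℝ (Fin (N - 1))) 1)).toReal

/-- The nonlocal mean curvature of `∂E` at `0` equals `H` (as a principal value). -/
def HasMeanCurv (N : ℕ) (s : ℝ) (f : EuclideanSpace ℝ (Fin (N - 1)) → ℝ) (H : ℝ) : Prop :=
  Tendsto (fun ε => (1 / omegaS N) * meanInt N s f ε) (nhdsWithin 0 (Set.Ioi 0)) (nhds H)



namespace NDCaux
open Set

noncomputable def Ker (α ρ h : ℝ) : ℝ := (ρ ^ 2 + h ^ 2) ^ (-α)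

lemma Ker_nonneg (α ρ h : ℝ) : 0 ≤ Ker α ρ h := Real.rpow_nonneg (by positivity) _

lemma Ker_le {α ρ : ℝ} (hα : 0 ≤ α) (hρ : ρ ≠ 0) (h : ℝ) : Ker α ρ h ≤ (ρ ^ 2) ^ (-α) :=
  Real.rpow_le_rpow_of_nonpos (by positivity) (by nlinarith [sq_nonneg h]) (by linarith)

lemma Ker_even (α ρ h : ℝ) : Ker α ρ (-h) = Ker α ρ h := by
  unfold Ker; rw [neg_sq]

lemma Ker_meas (α ρ : ℝ) : Measurable (Ker α ρ) := by unfold Ker; measurability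

lemma base_integrable {α : ℝ} (hα : 1 ≤ α) :
    Integrable (fun t : ℝ => (1 + t ^ 2) ^ (-α)) := by
  refine integrable_inv_one_add_sq.mono'
    ((by measurability : Measurable fun t : ℝ => (1 + t ^ 2) ^ (-α)).aestronglyMeasurable) ?_
  filter_upwards with t
  rw [Real.norm_eq_abs, abs_of_nonneg (Real.rpow_nonneg (by positivity) _)]
  calc (1 + t ^ 2) ^ (-α) ≤ (1 + t ^ 2) ^ (-1 : ℝ) :=
        Real.rpow_le_rpow_of_exponent_le (by nlinarith [sq_nonneg t]) (by linarith)
    _ = (1 + t ^ 2)⁻¹ := Real.rpow_neg_one _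

lemma Ker_scale {α ρ : ℝ} (hρ : ρ ≠ 0) (x : ℝ) :
    Ker α ρ (ρ * x) = (ρ ^ 2) ^ (-α) * (1 + x ^ 2) ^ (-α) := by
  unfold Ker
  rw [← Real.mul_rpow (by positivity) (by positivity)]
  congr 1
  ring

lemma Ker_integrable {α : ℝ} (hα : 1 ≤ α) {ρ : ℝ} (hρ : ρ ≠ 0) :
    Integrable (Ker α ρ) := by
  have comp : Integrable (fun x : ℝ => (1 + (ρ⁻¹ * x) ^ 2) ^ (-α)) :=
    (base_integrable hα).comp_mul_left' (inv_ne_zero hρ)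
  refine (comp.const_mul ((ρ ^ 2) ^ (-α))).congr (.of_forall fun x => ?_)
  have h := Ker_scale (α := α) hρ (ρ⁻¹ * x)
  rw [← mul_assoc, mul_inv_cancel₀ hρ, one_mul] at h
  exact h.symm

lemma Ker_integral {α : ℝ} (hα : 1 ≤ α) {ρ : ℝ} (hρ : 0 < ρ) :
    ∫ h, Ker α ρ h = ρ * (ρ ^ 2) ^ (-α) * ∫ t : ℝ, (1 + t ^ 2) ^ (-α) := by
  have h1 := MeasureTheory.Measure.integral_comp_mul_left (Ker α ρ) ρ
  have h2 : (∫ x : ℝ, Ker α ρ (ρ * x)) = (ρ ^ 2) ^ (-α) * ∫ t : ℝ, (1 + t ^ 2) ^ (-α) := by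
    rw [← integral_const_mul]
    exact integral_congr_ae (.of_forall fun x => Ker_scale hρ.ne' x)
  rw [h2, abs_of_nonneg (inv_nonneg.2 hρ.le), smul_eq_mul] at h1
  have h3 : ρ * ((ρ ^ 2) ^ (-α) * ∫ t : ℝ, (1 + t ^ 2) ^ (-α))
      = ρ * (ρ⁻¹ * ∫ y, Ker α ρ y) := by rw [h1]
  rw [← mul_assoc ρ ρ⁻¹, mul_inv_cancel₀ hρ.ne', one_mul] at h3
  rw [← h3]; ring

lemma integral_inter_Iic_eq_Ici {S : Set ℝ} (hS : MeasurableSet S)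
    (hsym : ∀ x, -x ∈ S ↔ x ∈ S) (α ρ : ℝ) :
    ∫ h in S ∩ Iic (0:ℝ), Ker α ρ h = ∫ h in S ∩ Ici (0:ℝ), Ker α ρ h := by
  rw [← integral_indicator (hS.inter measurableSet_Iic),
    ← integral_indicator (hS.inter measurableSet_Ici),
    ← MeasureTheory.integral_neg_eq_self ((S ∩ Iic (0:ℝ)).indicator (Ker α ρ)) volume]
  refine integral_congr_ae (.of_forall fun x => ?_)
  have hmem : (-x ∈ S ∩ Iic (0:ℝ)) ↔ (x ∈ S ∩ Ici (0:ℝ)) := by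
    simp only [Set.mem_inter_iff, Set.mem_Iic, Set.mem_Ici, hsym x, neg_nonpos]
  show (S ∩ Iic (0:ℝ)).indicator (Ker α ρ) (-x) = (S ∩ Ici (0:ℝ)).indicator (Ker α ρ) x
  by_cases hx : x ∈ S ∩ Ici (0:ℝ)
  · rw [Set.indicator_of_mem (hmem.mpr hx), Set.indicator_of_mem hx, Ker_even]
  · rw [Set.indicator_of_notMem (fun hc => hx (hmem.mp hc)),
      Set.indicator_of_notMem hx]

lemma integral_symmSet {α : ℝ} (hα : 1 ≤ α) {ρ : ℝ} (hρ : ρ ≠ 0) {S : Set ℝ}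
    (hS : MeasurableSet S) (hsym : ∀ x, -x ∈ S ↔ x ∈ S) :
    ∫ h in S, Ker α ρ h = 2 * ∫ h in S ∩ Iic (0:ℝ), Ker α ρ h := by
  have hint := Ker_integrable hα hρ
  have hU : (S ∩ Iic (0:ℝ)) ∪ (S ∩ Ioi (0:ℝ)) = S := by
    rw [← Set.inter_union_distrib_left, Set.Iic_union_Ioi, Set.inter_univ]
  have h1 : ∫ h in S, Ker α ρ h
      = (∫ h in S ∩ Iic (0:ℝ), Ker α ρ h) + ∫ h in S ∩ Ioi (0:ℝ), Ker α ρ h := by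
    rw [← setIntegral_union ((Set.Iic_disjoint_Ioi le_rfl).mono Set.inter_subset_right
        Set.inter_subset_right) (hS.inter measurableSet_Ioi) hint.integrableOn
        hint.integrableOn, hU]
  have h2 : ∫ h in S ∩ Ioi (0:ℝ), Ker α ρ h = ∫ h in S ∩ Ici (0:ℝ), Ker α ρ h :=
    setIntegral_congr_set (MeasureTheory.ae_eq_set_inter .rfl Ioi_ae_eq_Ici)
  rw [h1, h2, ← integral_inter_Iic_eq_Ici hS hsym]
  ring

lemma chi_full {α : ℝ} (hα : 1 ≤ α) {ρ : ℝ} (hρ : ρ ≠ 0) (a : ℝ) :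
    ∫ h, (if h ≤ a then (1:ℝ) else -1) * Ker α ρ h
      = 2 * ∫ h in (0:ℝ)..a, Ker α ρ h := by
  have hint := Ker_integrable hα hρ
  have hpt : ∀ h, (if h ≤ a then (1:ℝ) else -1) * Ker α ρ h
      = 2 * (Iic a).indicator (Ker α ρ) h - Ker α ρ h := by
    intro h
    rw [Set.indicator_apply]
    simp only [mem_Iic]
    split_ifs <;> ring
  have huniv : ∫ h, Ker α ρ h = 2 * ∫ h in Iic (0:ℝ), Ker α ρ h := by
    have := integral_symmSet hα hρ (S := univ) MeasurableSet.univ (fun x => by simp)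
    simpa [Measure.restrict_univ, Set.univ_inter] using this
  rw [integral_congr_ae (.of_forall hpt),
    integral_sub ((hint.indicator measurableSet_Iic).const_mul 2) hint,
    integral_const_mul, integral_indicator measurableSet_Iic, huniv,
    ← intervalIntegral.integral_Iic_sub_Iic hint.integrableOn hint.integrableOn]
  ring

lemma chi_integrable {α : ℝ} (hα : 1 ≤ α) {ρ : ℝ} (hρ : ρ ≠ 0) (a : ℝ) :
    Integrable (fun h => (if h ≤ a then (1:ℝ) else -1) * Ker α ρ h) := by
  refine (Ker_integrable hα hρ).mono' ?_ ?_
  · exact ((Measurable.ite measurableSet_Iic measurable_const measurable_const).mul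
      (Ker_meas α ρ)).aestronglyMeasurable
  · filter_upwards with h
    rw [Real.norm_eq_abs, abs_mul]
    have : |if h ≤ a then (1:ℝ) else -1| = 1 := by split_ifs <;> norm_num
    rw [this, one_mul, abs_of_nonneg (Ker_nonneg α ρ h)]

lemma measurableSet_T (ρ ε : ℝ) : MeasurableSet {h : ℝ | ρ ^ 2 + h ^ 2 < ε ^ 2} :=
  measurableSet_lt (by measurability) measurable_const

lemma trunc_bound {α : ℝ} (hα : 1 ≤ α) {ρ : ℝ} (hρ : ρ ≠ 0) (a ε : ℝ) :
    |∫ h in {h : ℝ | ρ ^ 2 + h ^ 2 < ε ^ 2}, (if h ≤ a then (1:ℝ) else -1) * Ker α ρ h|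
      ≤ 4 * |a| * (ρ ^ 2) ^ (-α) := by
  set T : Set ℝ := {h : ℝ | ρ ^ 2 + h ^ 2 < ε ^ 2} with hTdef
  have hT : MeasurableSet T := measurableSet_T ρ ε
  have hsym : ∀ x : ℝ, -x ∈ T ↔ x ∈ T := by
    intro x; simp only [hTdef, Set.mem_setOf_eq, neg_sq]
  have hint := Ker_integrable hα hρ
  have hpt : ∀ h, (if h ≤ a then (1:ℝ) else -1) * Ker α ρ h
      = 2 * (Iic a).indicator (Ker α ρ) h - Ker α ρ h := by
    intro h
    rw [Set.indicator_apply]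
    simp only [Set.mem_Iic]
    split_ifs <;> ring
  have e1 : ∫ h in T, (if h ≤ a then (1:ℝ) else -1) * Ker α ρ h
      = 2 * (∫ h in T ∩ Iic a, Ker α ρ h) - ∫ h in T, Ker α ρ h := by
    rw [integral_congr_ae (.of_forall hpt),
      integral_sub (((hint.indicator measurableSet_Iic).const_mul 2).integrableOn)
        hint.integrableOn,
      integral_const_mul, setIntegral_indicator measurableSet_Iic]
  have e2 : ∫ h in T, Ker α ρ h = 2 * ∫ h in T ∩ Iic (0:ℝ), Ker α ρ h :=
    integral_symmSet hα hρ hT hsym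
  set A : Set ℝ := T ∩ Iic a with hAdef
  set B : Set ℝ := T ∩ Iic (0:ℝ) with hBdef
  have hA : MeasurableSet A := hT.inter measurableSet_Iic
  have hB : MeasurableSet B := hT.inter measurableSet_Iic
  have splitI : ∀ {U V : Set ℝ}, MeasurableSet U → MeasurableSet V →
      (∫ h in U, Ker α ρ h) = (∫ h in U ∩ V, Ker α ρ h) + ∫ h in U \ V, Ker α ρ h := by
    intro U V hU hV
    rw [← setIntegral_union (disjoint_sdiff_self_right.mono_left Set.inter_subset_right)
      (hU.diff hV) hint.integrableOn hint.integrableOn, Set.inter_union_diff]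
  have dA := splitI hA hB
  have dB := splitI hB hA
  have est : ∀ (u v : ℝ) (S' : Set ℝ), S' ⊆ Ioc u v →
      ∫ h in S', Ker α ρ h ≤ (ρ ^ 2) ^ (-α) * |v - u| := by
    intro u v S' hsub
    have h1 : ∫ h in S', Ker α ρ h ≤ ∫ h in Ioc u v, Ker α ρ h :=
      setIntegral_mono_set hint.integrableOn (.of_forall fun h => Ker_nonneg α ρ h)
        (HasSubset.Subset.eventuallyLE hsub)
    have h2 : ‖∫ h in Ioc u v, Ker α ρ h‖ ≤ (ρ ^ 2) ^ (-α) * (volume (Ioc u v)).toReal :=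
      norm_setIntegral_le_of_norm_le_const
        (by rw [Real.volume_Ioc]; exact ENNReal.ofReal_lt_top)
        (fun x _ => by
          rw [Real.norm_eq_abs, abs_of_nonneg (Ker_nonneg α ρ x)]
          exact Ker_le (by linarith) hρ x)
    have h3 : (volume (Ioc u v)).toReal ≤ |v - u| := by
      rw [Real.volume_Ioc]
      rcases le_total u v with hc | hc
      · rw [ENNReal.toReal_ofReal (by linarith)]; exact le_abs_self _
      · rw [ENNReal.ofReal_of_nonpos (by linarith)]; simpa using abs_nonneg (v - u)
    calc ∫ h in S', Ker α ρ h ≤ ∫ h in Ioc u v, Ker α ρ h := h1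
      _ ≤ (ρ ^ 2) ^ (-α) * (volume (Ioc u v)).toReal := le_trans (le_abs_self _) h2
      _ ≤ (ρ ^ 2) ^ (-α) * |v - u| :=
          mul_le_mul_of_nonneg_left h3 (Real.rpow_nonneg (by positivity) _)
  have sub1 : A \ B ⊆ Ioc 0 a := by
    rintro x ⟨⟨hxT, hxa⟩, hxB⟩
    exact ⟨lt_of_not_ge fun h0 => hxB ⟨hxT, h0⟩, hxa⟩
  have sub2 : B \ A ⊆ Ioc a 0 := by
    rintro x ⟨⟨hxT, hx0⟩, hxA⟩
    exact ⟨lt_of_not_ge fun h0 => hxA ⟨hxT, h0⟩, hx0⟩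
  have n1 : 0 ≤ ∫ h in A \ B, Ker α ρ h :=
    setIntegral_nonneg (hA.diff hB) fun x _ => Ker_nonneg α ρ x
  have n2 : 0 ≤ ∫ h in B \ A, Ker α ρ h :=
    setIntegral_nonneg (hB.diff hA) fun x _ => Ker_nonneg α ρ x
  have b1 : ∫ h in A \ B, Ker α ρ h ≤ (ρ ^ 2) ^ (-α) * |a| := by
    simpa using est 0 a _ sub1
  have b2 : ∫ h in B \ A, Ker α ρ h ≤ (ρ ^ 2) ^ (-α) * |a| := by
    have := est a 0 _ sub2
    simpa [abs_sub_comm] using this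
  have hCnn : 0 ≤ (ρ ^ 2) ^ (-α) * |a| :=
    mul_nonneg (Real.rpow_nonneg (by positivity) _) (abs_nonneg a)
  have key : ∫ h in T, (if h ≤ a then (1:ℝ) else -1) * Ker α ρ h
      = 2 * ((∫ h in A \ B, Ker α ρ h) - ∫ h in B \ A, Ker α ρ h) := by
    rw [e1, e2, dA, dB, Set.inter_comm B A]; ring
  rw [key, abs_mul, abs_two]
  have habs : |(∫ h in A \ B, Ker α ρ h) - ∫ h in B \ A, Ker α ρ h|
      ≤ 2 * ((ρ ^ 2) ^ (-α) * |a|) :=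
    abs_sub_le_iff.2 ⟨by linarith, by linarith⟩
  nlinarith

lemma trunc_empty {ρ ε : ℝ} (hε : 0 ≤ ε) (hle : ε ≤ ρ) (g : ℝ → ℝ) :
    ∫ h in {h : ℝ | ρ ^ 2 + h ^ 2 < ε ^ 2}, g h = 0 := by
  have hTe : {h : ℝ | ρ ^ 2 + h ^ 2 < ε ^ 2} = (∅ : Set ℝ) := by
    ext h
    simp only [Set.mem_setOf_eq, Set.mem_empty_iff_false, iff_false, not_lt]
    nlinarith [sq_nonneg h]
  rw [hTe]
  simp

lemma inner_formula {α : ℝ} (hα : 1 ≤ α) {ρ : ℝ} (hρ : 0 < ρ) (a ε : ℝ) :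
    ∫ h, (if ε ^ 2 ≤ ρ ^ 2 + h ^ 2 then (if h ≤ a then (1:ℝ) else -1) * Ker α ρ h else 0)
      = 2 * (∫ h in (0:ℝ)..a, Ker α ρ h)
        - ∫ h in {h : ℝ | ρ ^ 2 + h ^ 2 < ε ^ 2},
            (if h ≤ a then (1:ℝ) else -1) * Ker α ρ h := by
  have hint := chi_integrable hα hρ.ne' a
  have hT := measurableSet_T ρ ε
  have hpt : ∀ h, (if ε ^ 2 ≤ ρ ^ 2 + h ^ 2 then (if h ≤ a then (1:ℝ) else -1) * Ker α ρ h else 0)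
      = (if h ≤ a then (1:ℝ) else -1) * Ker α ρ h
        - {h : ℝ | ρ ^ 2 + h ^ 2 < ε ^ 2}.indicator
            (fun h => (if h ≤ a then (1:ℝ) else -1) * Ker α ρ h) h := by
    intro h
    rw [Set.indicator_apply]
    by_cases hc : ε ^ 2 ≤ ρ ^ 2 + h ^ 2
    · have hm : h ∉ {h : ℝ | ρ ^ 2 + h ^ 2 < ε ^ 2} := by
        simp [Set.mem_setOf_eq, not_lt, hc]
      simp only [if_pos hc, if_neg hm, sub_zero]
    · have hm : h ∈ {h : ℝ | ρ ^ 2 + h ^ 2 < ε ^ 2} := by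
        simpa [Set.mem_setOf_eq] using lt_of_not_ge hc
      simp only [if_neg hc, if_pos hm]
      ring
  rw [integral_congr_ae (.of_forall hpt), integral_sub hint (hint.indicator hT),
    integral_indicator hT, chi_full hα hρ.ne' a]

end NDCaux


theorem nonlocal_dir_curv_graph_formula (N : ℕ) (hN : 3 ≤ N) (s : ℝ)
    (hs : s ∈ Set.Ioo (0 : ℝ) (1 / 2))
    (f : EuclideanSpace ℝ (Fin (N - 1)) → ℝ) (hf : ContDiff ℝ 2 f)
    (hf0 : f 0 = 0) (hdf : fderiv ℝ f 0 = 0)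
    (e : EuclideanSpace ℝ (Fin (N - 1))) (he : ‖e‖ = 1) :
    IntegrableOn (fun ρ => ρ ^ (N - 2) *
        ∫ h in (0:ℝ)..(f (ρ • e)), (ρ ^ 2 + h ^ 2) ^ (-(((N : ℝ) + 2 * s) / 2)))
      (Set.Ioi 0) ∧
    HasDirCurv N s f e (2 * ∫ ρ in Set.Ioi (0:ℝ), ρ ^ (N - 2) *
        ∫ h in (0:ℝ)..(f (ρ • e)), (ρ ^ 2 + h ^ 2) ^ (-(((N : ℝ) + 2 * s) / 2))) := by
  obtain ⟨hs0, hs12⟩ := hs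
  have hN3 : (3:ℝ) ≤ (N:ℝ) := by exact_mod_cast hN
  set α : ℝ := ((N : ℝ) + 2 * s) / 2 with hαdef
  have hα1 : (1:ℝ) ≤ α := by rw [hαdef]; linarith
  have h2α : 2 * α = (N:ℝ) + 2 * s := by rw [hαdef]; ring
  have ncast : ((N - 2 : ℕ) : ℝ) = (N : ℝ) - 2 := by
    have h2N : (2:ℕ) ≤ N := by omega
    rw [Nat.cast_sub h2N]; norm_num
  set c₁ : ℝ := ∫ t : ℝ, (1 + t ^ 2) ^ (-α) with hc₁def
  have hc₁nn : 0 ≤ c₁ := integral_nonneg fun t => Real.rpow_nonneg (by positivity) _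
  obtain ⟨C, hCnn, δ₀, hδ₀, hquad⟩ : ∃ C : ℝ, 0 ≤ C ∧ ∃ δ₀ : ℝ, 0 < δ₀ ∧
      ∀ x : EuclideanSpace ℝ (Fin (N-1)), ‖x‖ ≤ δ₀ → |f x| ≤ C * ‖x‖ ^ 2 := by
    obtain ⟨K, t, ht, hK⟩ :=
      ((hf.fderiv_right (by norm_num)).contDiffAt (x := 0)).exists_lipschitzOnWith
    obtain ⟨δ, hδpos, hδsub⟩ := Metric.mem_nhds_iff.1 ht
    refine ⟨(K:ℝ), K.2, δ/2, by linarith, fun x hx => ?_⟩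
    have hballmem : ∀ y : EuclideanSpace ℝ (Fin (N-1)), ‖y‖ ≤ ‖x‖ → y ∈ t := by
      intro y hy
      apply hδsub
      rw [Metric.mem_ball, dist_zero_right]
      calc ‖y‖ ≤ ‖x‖ := hy
        _ ≤ δ/2 := hx
        _ < δ := by linarith
    have hderb : ∀ y ∈ Metric.closedBall (0 : EuclideanSpace ℝ (Fin (N-1))) ‖x‖,
        ‖fderiv ℝ f y‖ ≤ (K:ℝ) * ‖x‖ := by
      intro y hy
      rw [Metric.mem_closedBall, dist_zero_right] at hy
      have hd := hK.dist_le_mul y (hballmem y hy) 0 (hballmem 0 (by simp))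
      rw [hdf, dist_zero_right, dist_zero_right] at hd
      calc ‖fderiv ℝ f y‖ ≤ (K:ℝ) * ‖y‖ := hd
        _ ≤ (K:ℝ) * ‖x‖ := mul_le_mul_of_nonneg_left hy K.2
    have hmvt := Convex.norm_image_sub_le_of_norm_fderiv_le
      (fun y _ => (hf.differentiable (by norm_num)).differentiableAt)
      hderb (convex_closedBall _ _)
      (Metric.mem_closedBall_self (norm_nonneg x))
      (show x ∈ Metric.closedBall (0 : EuclideanSpace ℝ (Fin (N-1))) ‖x‖ by
        simp [Metric.mem_closedBall, dist_zero_right])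
    rw [hf0, sub_zero, sub_zero] at hmvt
    calc |f x| = ‖f x‖ := (Real.norm_eq_abs _).symm
      _ ≤ (K:ℝ) * ‖x‖ * ‖x‖ := hmvt
      _ = (K:ℝ) * ‖x‖ ^ 2 := by ring
  have powE1 : ∀ ρ : ℝ, 0 < ρ → ρ ^ (N - 2) * (ρ ^ 2) ^ (-α) * ρ ^ 2 = ρ ^ (-(2*s)) := by
    intro ρ hρ
    rw [← Real.rpow_natCast ρ (N - 2), ← Real.rpow_natCast ρ 2, ← Real.rpow_mul hρ.le,
      ← Real.rpow_add hρ, ← Real.rpow_add hρ]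
    congr 1
    rw [ncast]
    push_cast
    linarith
  have powE2 : ∀ ρ : ℝ, 0 < ρ → ρ ^ (N - 2) * (ρ * (ρ ^ 2) ^ (-α)) = ρ ^ (-1-2*s) := by
    intro ρ hρ
    nth_rewrite 2 [← Real.rpow_one ρ]
    rw [← Real.rpow_natCast ρ (N - 2), ← Real.rpow_natCast ρ 2, ← Real.rpow_mul hρ.le,
      ← Real.rpow_add hρ, ← Real.rpow_add hρ]
    congr 1
    rw [ncast]
    push_cast
    linarith
  have normx : ∀ {ρ : ℝ}, 0 < ρ → ‖ρ • e‖ = ρ := by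
    intro ρ hρ
    rw [norm_smul, he, Real.norm_eq_abs, abs_of_pos hρ, mul_one]
  have hcont : Continuous fun ρ : ℝ => f (ρ • e) :=
    hf.continuous.comp (continuous_id.smul continuous_const)
  set G : ℝ → ℝ := fun ρ => ρ ^ (N - 2) *
      ∫ h in (0:ℝ)..(f (ρ • e)), (ρ ^ 2 + h ^ 2) ^ (-α) with hGdef
  have hGeq : ∀ ρ : ℝ, ρ ≠ 0 →
      (∫ h in (0:ℝ)..(f (ρ • e)), (ρ ^ 2 + h ^ 2) ^ (-α))
        = (∫ h : ℝ, if h ≤ f (ρ • e) then (ρ ^ 2 + h ^ 2) ^ (-α) else 0)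
          - ∫ h : ℝ, if h ≤ (0:ℝ) then (ρ ^ 2 + h ^ 2) ^ (-α) else 0 := by
    intro ρ hρ
    have hint : Integrable (fun h : ℝ => (ρ ^ 2 + h ^ 2) ^ (-α)) volume :=
      NDCaux.Ker_integrable hα1 hρ
    have i1 : ∀ a : ℝ, (∫ h : ℝ, if h ≤ a then (ρ ^ 2 + h ^ 2) ^ (-α) else 0)
        = ∫ h in Set.Iic a, (ρ ^ 2 + h ^ 2) ^ (-α) := by
      intro a
      rw [← integral_indicator measurableSet_Iic]
      refine integral_congr_ae (.of_forall fun h => ?_)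
      rw [Set.indicator_apply]
      simp [Set.mem_Iic]
    rw [i1, i1,
      intervalIntegral.integral_Iic_sub_Iic hint.integrableOn hint.integrableOn]
  have mK2 : Measurable fun p : ℝ × ℝ => (p.1 ^ 2 + p.2 ^ 2) ^ (-α) :=
    ((measurable_fst.pow_const 2).add (measurable_snd.pow_const 2)).pow measurable_const
  have hsetle : MeasurableSet {p : ℝ × ℝ | p.2 ≤ f (p.1 • e)} :=
    measurableSet_le measurable_snd (hcont.measurable.comp measurable_fst)
  have hGaesm : AEStronglyMeasurable G (volume.restrict (Set.Ioi 0)) := by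
    have m1 : Measurable fun ρ : ℝ =>
        ∫ h : ℝ, if h ≤ f (ρ • e) then (ρ ^ 2 + h ^ 2) ^ (-α) else 0 :=
      ((Measurable.ite hsetle mK2
        measurable_const).stronglyMeasurable.integral_prod_right').measurable
    have hset2 : MeasurableSet {p : ℝ × ℝ | p.2 ≤ (0:ℝ)} :=
      measurableSet_le measurable_snd measurable_const
    have m2 : Measurable fun ρ : ℝ =>
        ∫ h : ℝ, if h ≤ (0:ℝ) then (ρ ^ 2 + h ^ 2) ^ (-α) else 0 :=
      ((Measurable.ite hset2 mK2
        measurable_const).stronglyMeasurable.integral_prod_right').measurable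
    refine AEStronglyMeasurable.congr
      (((measurable_id.pow_const (N-2)).mul (m1.sub m2)).aestronglyMeasurable) ?_
    filter_upwards [ae_restrict_mem measurableSet_Ioi] with ρ hρ
    simp only [hGdef]
    rw [hGeq ρ (ne_of_gt hρ)]
    rfl
  have boundNear : ∀ ρ : ℝ, 0 < ρ → ρ ≤ δ₀ → |G ρ| ≤ C * ρ ^ (-(2*s)) := by
    intro ρ h0 hle
    have h1 : |∫ h in (0:ℝ)..(f (ρ • e)), (ρ ^ 2 + h ^ 2) ^ (-α)|
        ≤ (ρ ^ 2) ^ (-α) * |f (ρ • e) - 0| := by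
      have hb := intervalIntegral.norm_integral_le_of_norm_le_const
        (C := (ρ ^ 2) ^ (-α)) (f := fun h : ℝ => (ρ ^ 2 + h ^ 2) ^ (-α))
        (a := 0) (b := f (ρ • e)) ?_
      · simpa [Real.norm_eq_abs] using hb
      · intro x _
        rw [Real.norm_eq_abs, abs_of_nonneg (Real.rpow_nonneg (by positivity) _)]
        have := NDCaux.Ker_le (α := α) (by linarith) h0.ne' x
        simpa [NDCaux.Ker] using this
    have h2 : |f (ρ • e)| ≤ C * ρ ^ 2 := by
      have := hquad (ρ • e) (by rw [normx h0]; exact hle)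
      rwa [normx h0] at this
    have hGabs : |G ρ| = ρ ^ (N - 2)
        * |∫ h in (0:ℝ)..(f (ρ • e)), (ρ ^ 2 + h ^ 2) ^ (-α)| := by
      simp only [hGdef]
      rw [abs_mul, abs_of_nonneg (pow_nonneg h0.le _)]
    rw [hGabs]
    calc ρ ^ (N - 2) * |∫ h in (0:ℝ)..(f (ρ • e)), (ρ ^ 2 + h ^ 2) ^ (-α)|
        ≤ ρ ^ (N - 2) * ((ρ ^ 2) ^ (-α) * (C * ρ ^ 2)) := by
          refine mul_le_mul_of_nonneg_left (le_trans h1 ?_) (pow_nonneg h0.le _)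
          rw [sub_zero]
          exact mul_le_mul_of_nonneg_left h2 (Real.rpow_nonneg (by positivity) _)
      _ = C * (ρ ^ (N - 2) * (ρ ^ 2) ^ (-α) * ρ ^ 2) := by ring
      _ = C * ρ ^ (-(2*s)) := by rw [powE1 ρ h0]
  have boundFar : ∀ ρ : ℝ, 0 < ρ → |G ρ| ≤ c₁ * ρ ^ (-1-2*s) := by
    intro ρ h0
    have hint : Integrable (fun h : ℝ => (ρ ^ 2 + h ^ 2) ^ (-α)) volume :=
      NDCaux.Ker_integrable hα1 h0.ne'
    have h1 : |∫ h in (0:ℝ)..(f (ρ • e)), (ρ ^ 2 + h ^ 2) ^ (-α)|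
        ≤ ∫ h : ℝ, (ρ ^ 2 + h ^ 2) ^ (-α) := by
      rw [← Real.norm_eq_abs]
      refine le_trans intervalIntegral.norm_integral_le_integral_norm_uIoc ?_
      have hcg : ∫ x in Set.uIoc (0:ℝ) (f (ρ • e)), ‖(ρ ^ 2 + x ^ 2) ^ (-α)‖
          = ∫ x in Set.uIoc (0:ℝ) (f (ρ • e)), (ρ ^ 2 + x ^ 2) ^ (-α) :=
        setIntegral_congr_fun measurableSet_uIoc fun x _ => by
          rw [Real.norm_eq_abs, abs_of_nonneg (Real.rpow_nonneg (by positivity) _)]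
      rw [hcg]
      exact setIntegral_le_integral hint
        (.of_forall fun h => Real.rpow_nonneg (by positivity) _)
    have h2 : (∫ h : ℝ, (ρ ^ 2 + h ^ 2) ^ (-α)) = ρ * (ρ ^ 2) ^ (-α) * c₁ := by
      have hv := NDCaux.Ker_integral hα1 h0
      simp only [NDCaux.Ker] at hv
      rw [hv, hc₁def]
    have hGabs : |G ρ| = ρ ^ (N - 2)
        * |∫ h in (0:ℝ)..(f (ρ • e)), (ρ ^ 2 + h ^ 2) ^ (-α)| := by
      simp only [hGdef]
      rw [abs_mul, abs_of_nonneg (pow_nonneg h0.le _)]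
    rw [hGabs]
    calc ρ ^ (N - 2) * |∫ h in (0:ℝ)..(f (ρ • e)), (ρ ^ 2 + h ^ 2) ^ (-α)|
        ≤ ρ ^ (N - 2) * (ρ * (ρ ^ 2) ^ (-α) * c₁) := by
          refine mul_le_mul_of_nonneg_left ?_ (pow_nonneg h0.le _)
          rw [← h2]
          exact h1
      _ = c₁ * (ρ ^ (N - 2) * (ρ * (ρ ^ 2) ^ (-α))) := by ring
      _ = c₁ * ρ ^ (-1-2*s) := by rw [powE2 ρ h0]
  have part1 : IntegrableOn G (Set.Ioi 0) := by
    set W : ℝ → ℝ := (Set.Ioc (0:ℝ) δ₀).indicator (fun ρ => C * ρ ^ (-(2*s)))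
      + (Set.Ioi δ₀).indicator (fun ρ => c₁ * ρ ^ (-1-2*s)) with hWdef
    have w1 : IntegrableOn (fun ρ : ℝ => C * ρ ^ (-(2*s))) (Set.Ioc 0 δ₀) :=
      Integrable.const_mul
        ((intervalIntegral.intervalIntegrable_rpow' (a := 0) (b := δ₀)
          (by linarith)).1) C
    have w2 : IntegrableOn (fun ρ : ℝ => c₁ * ρ ^ (-1-2*s)) (Set.Ioi δ₀) :=
      Integrable.const_mul (integrableOn_Ioi_rpow_of_lt (by linarith) hδ₀) c₁
    have hWint : Integrable W (volume.restrict (Set.Ioi (0:ℝ))) := by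
      refine Integrable.integrableOn ?_
      exact (w1.integrable_indicator measurableSet_Ioc).add
        (w2.integrable_indicator measurableSet_Ioi)
    refine Integrable.mono' hWint hGaesm ?_
    rw [ae_restrict_iff' measurableSet_Ioi]
    refine ae_of_all _ fun ρ hρ => ?_
    have h0 : (0:ℝ) < ρ := hρ
    rw [Real.norm_eq_abs]
    rcases le_or_gt ρ δ₀ with hc | hc
    · have hm1 : ρ ∈ Set.Ioc (0:ℝ) δ₀ := ⟨h0, hc⟩
      have hm2 : ρ ∉ Set.Ioi δ₀ := fun hm => absurd hm (not_lt.2 hc)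
      have hW : W ρ = C * ρ ^ (-(2*s)) := by
        simp only [hWdef, Pi.add_apply]
        rw [Set.indicator_of_mem hm1, Set.indicator_of_notMem hm2, add_zero]
      rw [hW]
      exact boundNear ρ h0 hc
    · have hm1 : ρ ∉ Set.Ioc (0:ℝ) δ₀ := fun hm => absurd hm.2 (not_le.2 hc)
      have hm2 : ρ ∈ Set.Ioi δ₀ := hc
      have hW : W ρ = c₁ * ρ ^ (-1-2*s) := by
        simp only [hWdef, Pi.add_apply]
        rw [Set.indicator_of_notMem hm1, Set.indicator_of_mem hm2, zero_add]
      rw [hW]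
      exact boundFar ρ h0
  refine ⟨part1, ?_⟩
  set L : ℝ := 2 * ∫ ρ in Set.Ioi (0:ℝ), G ρ with hLdef
  show Filter.Tendsto (dirInt N s f e) (nhdsWithin 0 (Set.Ioi 0)) (nhds L)
  have key : ∀ ε : ℝ, ε ∈ Set.Ioo (0:ℝ) δ₀ →
      |dirInt N s f e ε - L| ≤ (4*C/(-(2*s)+1)) * ε ^ (-(2*s)+1) := by
    intro ε hε
    obtain ⟨hε0, hεδ⟩ := hε
    set cE : ℝ → ℝ := fun ρ => ρ ^ (N - 2) *
      ∫ h : ℝ, if ρ ^ 2 + h ^ 2 < ε ^ 2 then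
        (if h ≤ f (ρ • e) then (1:ℝ) else -1) * (ρ ^ 2 + h ^ 2) ^ (-α) else 0 with hcEdef
    have hcE_set : ∀ ρ : ℝ,
        (∫ h : ℝ, if ρ ^ 2 + h ^ 2 < ε ^ 2 then
          (if h ≤ f (ρ • e) then (1:ℝ) else -1) * (ρ ^ 2 + h ^ 2) ^ (-α) else 0)
        = ∫ h in {h : ℝ | ρ ^ 2 + h ^ 2 < ε ^ 2},
            (if h ≤ f (ρ • e) then (1:ℝ) else -1) * (ρ ^ 2 + h ^ 2) ^ (-α) := by
      intro ρ
      rw [← integral_indicator (NDCaux.measurableSet_T ρ ε)]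
      refine integral_congr_ae (.of_forall fun h => ?_)
      rw [Set.indicator_apply]
      simp [Set.mem_setOf_eq]
    have stepA : dirInt N s f e ε = ∫ ρ in Set.Ioi (0:ℝ), (2 * G ρ - cE ρ) := by
      unfold dirInt
      rw [← hαdef]
      refine setIntegral_congr_fun measurableSet_Ioi fun ρ hρ => ?_
      have h0 : (0:ℝ) < ρ := hρ
      have hptw : ∀ h : ℝ,
          (if ε ^ 2 ≤ ρ ^ 2 + h ^ 2 then
            ρ ^ (N - 2) * chiT f (ρ • e, h) / (ρ ^ 2 + h ^ 2) ^ α else 0)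
          = ρ ^ (N - 2) * (if ε ^ 2 ≤ ρ ^ 2 + h ^ 2 then
              (if h ≤ f (ρ • e) then (1:ℝ) else -1) * (ρ ^ 2 + h ^ 2) ^ (-α) else 0) := by
        intro h
        have hb : (0:ℝ) < ρ ^ 2 + h ^ 2 := by positivity
        have hchi : chiT f (ρ • e, h) = if h ≤ f (ρ • e) then (1:ℝ) else -1 := rfl
        rw [hchi, Real.rpow_neg hb.le]
        split_ifs <;> ring
      rw [integral_congr_ae (.of_forall hptw), integral_const_mul]
      have IF := NDCaux.inner_formula hα1 h0 (f (ρ • e)) ε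
      simp only [NDCaux.Ker] at IF
      rw [IF]
      simp only [hcEdef, hGdef]
      rw [hcE_set ρ]
      ring
    have hcEmeas : AEStronglyMeasurable cE (volume.restrict (Set.Ioi (0:ℝ))) := by
      have hsetT : MeasurableSet {p : ℝ × ℝ | p.1 ^ 2 + p.2 ^ 2 < ε ^ 2} :=
        measurableSet_lt
          ((measurable_fst.pow_const 2).add (measurable_snd.pow_const 2)) measurable_const
      have minner : Measurable fun ρ : ℝ => ∫ h : ℝ,
          if ρ ^ 2 + h ^ 2 < ε ^ 2 then
            (if h ≤ f (ρ • e) then (1:ℝ) else -1) * (ρ ^ 2 + h ^ 2) ^ (-α) else 0 :=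
        ((Measurable.ite hsetT
          ((Measurable.ite hsetle measurable_const measurable_const).mul mK2)
          measurable_const).stronglyMeasurable.integral_prod_right').measurable
      exact (((measurable_id.pow_const (N-2)).mul minner).aestronglyMeasurable).restrict
    set WE : ℝ → ℝ := (Set.Ioo (0:ℝ) ε).indicator (fun ρ => (4*C) * ρ ^ (-(2*s)))
      with hWEdef
    have hWEcore : IntegrableOn (fun ρ : ℝ => (4*C) * ρ ^ (-(2*s))) (Set.Ioo (0:ℝ) ε) :=
      Integrable.const_mul (((intervalIntegral.intervalIntegrable_rpow' (a := 0) (b := ε)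
        (r := -(2*s)) (by linarith)).1).mono_set Set.Ioo_subset_Ioc_self) (4*C)
    have hWEint : Integrable WE (volume.restrict (Set.Ioi (0:ℝ))) :=
      Integrable.integrableOn (hWEcore.integrable_indicator measurableSet_Ioo)
    have hcEbound : ∀ᵐ ρ ∂volume.restrict (Set.Ioi (0:ℝ)), ‖cE ρ‖ ≤ WE ρ := by
      rw [ae_restrict_iff' measurableSet_Ioi]
      refine ae_of_all _ fun ρ hρ => ?_
      have h0 : (0:ℝ) < ρ := hρ
      rw [Real.norm_eq_abs]
      rcases lt_or_ge ρ ε with hc | hc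
      · have hm1 : ρ ∈ Set.Ioo (0:ℝ) ε := ⟨h0, hc⟩
        have hWE : WE ρ = (4*C) * ρ ^ (-(2*s)) := by
          simp only [hWEdef]
          rw [Set.indicator_of_mem hm1]
        have habs : |cE ρ| ≤ ρ ^ (N - 2) * (4 * |f (ρ • e)| * (ρ ^ 2) ^ (-α)) := by
          simp only [hcEdef]
          rw [abs_mul, abs_of_nonneg (pow_nonneg h0.le _), hcE_set ρ]
          refine mul_le_mul_of_nonneg_left ?_ (pow_nonneg h0.le _)
          have htb := NDCaux.trunc_bound hα1 h0.ne' (f (ρ • e)) ε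
          simp only [NDCaux.Ker] at htb
          exact htb
        have hfb : |f (ρ • e)| ≤ C * ρ ^ 2 := by
          have := hquad (ρ • e) (by rw [normx h0]; linarith)
          rwa [normx h0] at this
        rw [hWE]
        calc |cE ρ| ≤ ρ ^ (N - 2) * (4 * |f (ρ • e)| * (ρ ^ 2) ^ (-α)) := habs
          _ ≤ ρ ^ (N - 2) * (4 * (C * ρ ^ 2) * (ρ ^ 2) ^ (-α)) := by
              refine mul_le_mul_of_nonneg_left ?_ (pow_nonneg h0.le _)
              refine mul_le_mul_of_nonneg_right ?_ (Real.rpow_nonneg (by positivity) _)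
              linarith
          _ = (4*C) * (ρ ^ (N - 2) * (ρ ^ 2) ^ (-α) * ρ ^ 2) := by ring
          _ = (4*C) * ρ ^ (-(2*s)) := by rw [powE1 ρ h0]
      · have hm1 : ρ ∉ Set.Ioo (0:ℝ) ε := fun hm => absurd hm.2 (not_lt.2 hc)
        have hWE : WE ρ = 0 := by
          simp only [hWEdef]
          exact Set.indicator_of_notMem hm1 _
        have hcE0 : cE ρ = 0 := by
          simp only [hcEdef]
          rw [hcE_set ρ, NDCaux.trunc_empty hε0.le hc, mul_zero]
        rw [hWE, hcE0]
        simp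
    have hcEint : Integrable cE (volume.restrict (Set.Ioi (0:ℝ))) :=
      Integrable.mono' hWEint hcEmeas hcEbound
    have hGint2 : Integrable (fun ρ => 2 * G ρ) (volume.restrict (Set.Ioi (0:ℝ))) :=
      Integrable.const_mul part1 2
    have stepC : dirInt N s f e ε - L = - ∫ ρ in Set.Ioi (0:ℝ), cE ρ := by
      rw [stepA, integral_sub hGint2 hcEint, integral_const_mul, hLdef]
      ring
    rw [stepC, abs_neg]
    have hb1 : |∫ ρ in Set.Ioi (0:ℝ), cE ρ| ≤ ∫ ρ in Set.Ioi (0:ℝ), WE ρ := by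
      rw [← Real.norm_eq_abs]
      exact norm_integral_le_of_norm_le hWEint hcEbound
    have hb2 : ∫ ρ in Set.Ioi (0:ℝ), WE ρ = (4*C/(-(2*s)+1)) * ε ^ (-(2*s)+1) := by
      simp only [hWEdef]
      rw [setIntegral_indicator measurableSet_Ioo,
        Set.inter_eq_self_of_subset_right Set.Ioo_subset_Ioi_self,
        integral_const_mul,
        setIntegral_congr_set Ioo_ae_eq_Ioc,
        ← intervalIntegral.integral_of_le hε0.le,
        integral_rpow (Or.inl (by linarith)),
        Real.zero_rpow (by linarith)]
      ring
    exact hb2 ▸ hb1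
  have hev : ∀ᶠ ε in nhdsWithin (0:ℝ) (Set.Ioi 0),
      ‖dirInt N s f e ε - L‖ ≤ (4*C/(-(2*s)+1)) * ε ^ (-(2*s)+1) := by
    filter_upwards [Ioo_mem_nhdsGT_of_mem (Set.mem_Ico.2 ⟨le_refl 0, hδ₀⟩)] with ε hε
    rw [Real.norm_eq_abs]
    exact key ε hε
  have hΨ : Filter.Tendsto (fun ε : ℝ => (4*C/(-(2*s)+1)) * ε ^ (-(2*s)+1))
      (nhdsWithin 0 (Set.Ioi 0)) (nhds 0) := by
    have h0 : Filter.Tendsto (fun ε : ℝ => ε ^ (-(2*s)+1)) (nhds (0:ℝ)) (nhds 0) := by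
      have hct := (Real.continuousAt_rpow_const 0 (-(2*s)+1) (Or.inr (by linarith))).tendsto
      rwa [Real.zero_rpow (by linarith)] at hct
    simpa using ((h0.mono_left nhdsWithin_le_nhds).const_mul (4*C/(-(2*s)+1)))
  have hfinal := squeeze_zero_norm' hev hΨ
  have hfin2 := hfinal.add_const L
  simpa using hfin2
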